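/- arXiv:2605.26852 — 4 statements merged into one kernel-verified Lean document; each statement's English description precedes it below -/
import Mathlib

section
/- Let p ≥ 1 be an integer, let N be a p-rooted almost-binary phylogenetic network on X, and let Z = (e_1, ..., e_m) be a maximal zig-zag trail of N that is a crown. Then a subset S ⊆ E(Z), encoded as the 0-1 string ⟨b_1 ... b_m⟩ with b_i = 1 iff e_i ∈ S, is B-admissible if and only if no '00' and no '111' occurs in the string read in any circular ordering (i.e., viewing the indices modulo m). -/
open Finset

variable {V : Type} [DecidableEq V] [Fintype V]

/-- The vertex set of the digraph given by the edge set `E`. -/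
def verts (E : Finset (V × V)) : Finset V :=
  E.image Prod.fst ∪ E.image Prod.snd

/-- In-degree of `v` in the digraph with edge set `E`. -/
def indeg (E : Finset (V × V)) (v : V) : ℕ :=
  (E.filter fun e => e.2 = v).card

/-- Out-degree of `v` in the digraph with edge set `E`. -/
def outdeg (E : Finset (V × V)) (v : V) : ℕ :=
  (E.filter fun e => e.1 = v).card

/-- `E` is (the edge set of) a `p`-rooted almost-binary phylogenetic network on `X`:
a finite simple DAG with exactly `p` in-degree-0 vertices, each of out-degree 1 or 2 (the roots),
whose set of in-degree-1, out-degree-0 vertices is `X` (the leaves), and all of whose other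
vertices have in-degree and out-degree in `{1, 2}`. -/
structure IsPhyloNet (E : Finset (V × V)) (p : ℕ) (X : Finset V) : Prop where
  acyclic : ∀ v : V, ¬ Relation.TransGen (fun a b => (a, b) ∈ E) v v
  roots_card : ((verts E).filter fun v => indeg E v = 0).card = p
  root_outdeg : ∀ v ∈ verts E, indeg E v = 0 → outdeg E v = 1 ∨ outdeg E v = 2
  leaves_eq : (verts E).filter (fun v => indeg E v = 1 ∧ outdeg E v = 0) = X
  internal_deg : ∀ v ∈ verts E, indeg E v ≠ 0 → v ∉ X →
    (indeg E v = 1 ∨ indeg E v = 2) ∧ (outdeg E v = 1 ∨ outdeg E v = 2)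

/-- Two directed edges share a tail or share a head. -/
def Shares (e f : V × V) : Prop := e.1 = f.1 ∨ e.2 = f.2

/-- `S` is (the edge set of) a zig-zag trail of the digraph `E`: a subgraph with `m ≥ 1`
edges which can be ordered so that consecutive edges share a head or share a tail. -/
def IsZigzagTrail (E S : Finset (V × V)) : Prop :=
  S ⊆ E ∧ ∃ l : List (V × V), l ≠ [] ∧ l.Nodup ∧ l.toFinset = S ∧ l.Chain' Shares

/-- A maximal zig-zag trail: one that is not a proper subgraph of another zig-zag trail. -/
def IsMaximalZigzagTrail (E S : Finset (V × V)) : Prop :=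
  IsZigzagTrail E S ∧ ∀ S', IsZigzagTrail E S' → ¬ S ⊂ S'

/-- The `i`-th edge (0-indexed) of a zig-zag sequence on vertices `f 0, f 1, ...`;
when `down = true` the first edge descends (`f 0 > f 1`), and directions alternate. -/
def zigEdge (f : ℕ → V) (down : Bool) (i : ℕ) : V × V :=
  if decide (i % 2 = 0) = down then (f i, f (i + 1)) else (f (i + 1), f i)

/-- `S` consists of the `m` distinct edges of the zig-zag sequence on `f 0, ..., f m`. -/
def IsZigzagShape (S : Finset (V × V)) (m : ℕ) (f : ℕ → V) (down : Bool) : Prop :=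
  S = (Finset.range m).image (zigEdge f down) ∧
  ∀ i < m, ∀ j < m, zigEdge f down i = zigEdge f down j → i = j

/-- A crown: an even number `m` of edges written cyclically as `v₀ > v₁ < ⋯ < v_m = v₀`. -/
def IsCrown (S : Finset (V × V)) : Prop :=
  ∃ m f, 1 ≤ m ∧ m % 2 = 0 ∧ f m = f 0 ∧ IsZigzagShape S m f true

/-- An M-fence: a non-crown with an even number `m` of edges,
of the form `v₀ < v₁ > ⋯ > v_m ≠ v₀`. -/
def IsMFence (S : Finset (V × V)) : Prop :=
  ¬ IsCrown S ∧ ∃ m f, 1 ≤ m ∧ m % 2 = 0 ∧ f m ≠ f 0 ∧ IsZigzagShape S m f false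

/-- A W-fence: a non-crown with an even number `m` of edges,
of the form `v₀ > v₁ < ⋯ < v_m ≠ v₀`. -/
def IsWFence (S : Finset (V × V)) : Prop :=
  ¬ IsCrown S ∧ ∃ m f, 1 ≤ m ∧ m % 2 = 0 ∧ f m ≠ f 0 ∧ IsZigzagShape S m f true

/-- An N-fence: a non-crown with an odd number `m` of edges,
of the form `v₀ > v₁ < ⋯ > v_m`. -/
def IsNFence (S : Finset (V × V)) : Prop :=
  ¬ IsCrown S ∧ ∃ m f, m % 2 = 1 ∧ IsZigzagShape S m f true

/-- A support network of `N = (V, E)`: a spanning subgraph that is itself a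
`p`-rooted almost-binary phylogenetic network on `X` (identified with its edge set). -/
def IsSupportNet (E S : Finset (V × V)) (p : ℕ) (X : Finset V) : Prop :=
  S ⊆ E ∧ verts S = verts E ∧ IsPhyloNet S p X

/-- A minimal support network: no support network is a proper subgraph of it. -/
def IsMinimalSupportNet (E S : Finset (V × V)) (p : ℕ) (X : Finset V) : Prop :=
  IsSupportNet E S p X ∧ ∀ S', IsSupportNet E S' p X → ¬ S' ⊂ S

/-- A minimum support network: one with the fewest edges among all support networks. -/
def IsMinimumSupportNet (E S : Finset (V × V)) (p : ℕ) (X : Finset V) : Prop :=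
  IsSupportNet E S p X ∧ ∀ S', IsSupportNet E S' p X → S.card ≤ S'.card

/-- `S ⊆ Z` is A-admissible (degrees taken in the ambient network `E`):
(C1) `S` contains every edge `(u,v)` of `Z` with `outdeg u = 1` or `indeg v = 1`;
(C2) of any two distinct edges of `Z` sharing a tail or a head, `S` contains at least one. -/
def AAdmissible (E Z S : Finset (V × V)) : Prop :=
  S ⊆ Z ∧
  (∀ e ∈ Z, (outdeg E e.1 = 1 ∨ indeg E e.2 = 1) → e ∈ S) ∧
  (∀ e₁ ∈ Z, ∀ e₂ ∈ Z, e₁ ≠ e₂ → Shares e₁ e₂ → e₁ ∈ S ∨ e₂ ∈ S)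

/-- A B-admissible subset: an A-admissible subset none of whose proper subsets
is A-admissible. -/
def BAdmissible (E Z S : Finset (V × V)) : Prop :=
  AAdmissible E Z S ∧ ∀ S', S' ⊂ S → ¬ AAdmissible E Z S'

/-- A C-admissible subset: an A-admissible subset of minimum cardinality. -/
def CAdmissible (E Z S : Finset (V × V)) : Prop :=
  AAdmissible E Z S ∧ ∀ S', AAdmissible E Z S' → S.card ≤ S'.card

/-- One subdivision step: an edge `(u, v)` is replaced by `(u, w), (w, v)` for a fresh
vertex `w`. -/
def SubdivStep (T T' : Finset (V × V)) : Prop :=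
  ∃ u w v, (u, v) ∈ T ∧ w ∉ verts T ∧
    T' = insert (u, w) (insert (w, v) (T.erase (u, v)))

/-- `S` is a subdivision of `T` (zero or more subdivision steps). -/
def IsSubdivisionOf (S T : Finset (V × V)) : Prop :=
  Relation.ReflTransGen SubdivStep T S

/-- A rooted binary phylogenetic tree on `X`: a 1-rooted network on `X` in which every
non-root, non-leaf vertex has in-degree 1 and out-degree 2. -/
def IsBinaryPhyloTree (T : Finset (V × V)) (X : Finset V) : Prop :=
  IsPhyloNet T 1 X ∧
  ∀ v ∈ verts T, indeg T v ≠ 0 → v ∉ X → indeg T v = 1 ∧ outdeg T v = 2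

/-- `N = (V, E)` is tree-based: it has a support tree, i.e. a spanning subgraph that is a
subdivision of some rooted binary phylogenetic tree on `X`. -/
def IsTreeBased (E : Finset (V × V)) (X : Finset V) : Prop :=
  ∃ S T, S ⊆ E ∧ verts S = verts E ∧ IsBinaryPhyloTree T X ∧ IsSubdivisionOf S T

/-- The underlying undirected simple graph of the digraph with edge set `S`. -/
def usym (S : Finset (V × V)) : SimpleGraph V where
  Adj u v := u ≠ v ∧ ((u, v) ∈ S ∨ (v, u) ∈ S)
  symm := ⟨fun _ _ h => ⟨h.1.symm, h.2.symm⟩⟩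
  loopless := ⟨fun _ h => h.1 rfl⟩

/-- Two edges of `S` lie in a common block of the underlying undirected graph:
they are equal or lie on a common cycle. -/
def SameBlock (S : Finset (V × V)) (e f : V × V) : Prop :=
  e = f ∨ ∃ (a : V) (w : (usym S).Walk a a), w.IsCycle ∧
    s(e.1, e.2) ∈ w.edges ∧ s(f.1, f.2) ∈ w.edges

/-- The number of reticulations (in-degree-2 vertices) contained in the block of the
edge `e` of `S`. -/
noncomputable def blockReticCount (S : Finset (V × V)) (e : V × V) : ℕ :=
  Set.ncard {v : V | indeg S v = 2 ∧ ∃ f ∈ S, SameBlock S e f ∧ (f.1 = v ∨ f.2 = v)}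

/-- The level of the network with edge set `S`: the maximum number of reticulations
contained in a block. -/
noncomputable def level (S : Finset (V × V)) : ℕ :=
  S.sup (blockReticCount S)

/-!
Along a cyclic zig-zag trail `c 0, c 1, …, c (m - 1)` every edge shares an endpoint with both of
its cyclic neighbours. In a network the endpoints of an edge have degree at most two, so these
neighbours are the only edges sharing an endpoint with it, and they share different endpoints.
The latter makes (C1) vacuous on a crown; the former turns (C2) into "of any two cyclically
consecutive edges at least one is chosen". A set with that property is minimal exactly when no
chosen edge can be dropped, i.e. when no three consecutive edges are chosen.
-/

variable {α : Type}

lemma Shares.symm {e f : α × α} (h : Shares e f) : Shares f e :=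
  h.imp Eq.symm Eq.symm

section Degrees

variable [DecidableEq α] {E : Finset (α × α)}

lemma card_le_outdeg {T : Finset (α × α)} {v : α} (hT : T ⊆ E) (h : ∀ g ∈ T, g.1 = v) :
    T.card ≤ outdeg E v :=
  card_le_card fun g hg => mem_filter.2 ⟨hT hg, h g hg⟩

lemma card_le_indeg {T : Finset (α × α)} {v : α} (hT : T ⊆ E) (h : ∀ g ∈ T, g.2 = v) :
    T.card ≤ indeg E v :=
  card_le_card fun g hg => mem_filter.2 ⟨hT hg, h g hg⟩

lemma IsPhyloNet.degrees_le_two {p : ℕ} {X : Finset α} (hN : IsPhyloNet E p X) :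
    ∀ g ∈ E, outdeg E g.1 ≤ 2 ∧ indeg E g.2 ≤ 2 := by
  intro g hg
  have h1 : g.1 ∈ verts E := mem_union_left _ (mem_image_of_mem _ hg)
  have h2 : g.2 ∈ verts E := mem_union_right _ (mem_image_of_mem _ hg)
  have hout : 1 ≤ outdeg E g.1 := card_pos.2 ⟨g, mem_filter.2 ⟨hg, rfl⟩⟩
  have hin : 1 ≤ indeg E g.2 := card_pos.2 ⟨g, mem_filter.2 ⟨hg, rfl⟩⟩
  have hleaf : ∀ v ∈ X, indeg E v = 1 ∧ outdeg E v = 0 :=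
    fun v hv => by rw [← hN.leaves_eq] at hv; exact (mem_filter.1 hv).2
  constructor
  · by_cases hX : g.1 ∈ X
    · have := hleaf _ hX; omega
    by_cases h0 : indeg E g.1 = 0
    · have := hN.root_outdeg _ h1 h0; omega
    · have := (hN.internal_deg _ h1 h0 hX).2; omega
  · by_cases hX : g.2 ∈ X
    · have := hleaf _ hX; omega
    · have := (hN.internal_deg _ h2 (by omega) hX).1; omega

lemma card_le_two_of_shares (hdeg : ∀ g ∈ E, outdeg E g.1 ≤ 2 ∧ indeg E g.2 ≤ 2)
    {g : α × α} (hg : g ∈ E) {T : Finset (α × α)} (hT : T ⊆ E)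
    (h : ∀ x ∈ T, x ≠ g ∧ Shares g x) : T.card ≤ 2 := by
  have hsub :
      T ⊆ (E.filter fun x => x.1 = g.1).erase g ∪ (E.filter fun x => x.2 = g.2).erase g := by
    intro x hx
    obtain ⟨hne, h1 | h2⟩ := h x hx
    · exact mem_union_left _ (mem_erase.2 ⟨hne, mem_filter.2 ⟨hT hx, h1.symm⟩⟩)
    · exact mem_union_right _ (mem_erase.2 ⟨hne, mem_filter.2 ⟨hT hx, h2.symm⟩⟩)
  have hout := card_erase_of_mem (mem_filter.2 ⟨hg, rfl⟩ : g ∈ E.filter fun x => x.1 = g.1)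
  have hin := card_erase_of_mem (mem_filter.2 ⟨hg, rfl⟩ : g ∈ E.filter fun x => x.2 = g.2)
  have := hdeg g hg
  have := (card_le_card hsub).trans (card_union_le _ _)
  unfold outdeg indeg at *
  omega

lemma one_lt_outdeg_and_indeg_of_shares (hdeg : ∀ g ∈ E, outdeg E g.1 ≤ 2 ∧ indeg E g.2 ≤ 2)
    {g a b : α × α} (hg : g ∈ E) (ha : a ∈ E) (hb : b ∈ E) (hag : a ≠ g) (hbg : b ≠ g)
    (hab : a ≠ b) (hga : Shares g a) (hgb : Shares g b) :
    1 < outdeg E g.1 ∧ 1 < indeg E g.2 := by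
  have hdg := hdeg g hg
  have hgab : ({g, a, b} : Finset (α × α)).card = 3 :=
    card_eq_three.2 ⟨g, a, b, hag.symm, hbg.symm, hab, rfl⟩
  have hsub : ∀ x ∈ E, ({g, x} : Finset (α × α)) ⊆ E := fun x hx => by
    simp [insert_subset_iff, hg, hx]
  rcases hga with ha1 | ha2 <;> rcases hgb with hb1 | hb2
  · have := card_le_outdeg (E := E) (T := {g, a, b}) (v := g.1)
      (by simp [insert_subset_iff, hg, ha, hb]) (by simp [← ha1, ← hb1])
    omega
  · exact ⟨(card_pair hag.symm).symm.trans_le (card_le_outdeg (hsub a ha) (by simp [ha1])),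
      (card_pair hbg.symm).symm.trans_le (card_le_indeg (hsub b hb) (by simp [hb2]))⟩
  · exact ⟨(card_pair hbg.symm).symm.trans_le (card_le_outdeg (hsub b hb) (by simp [hb1])),
      (card_pair hag.symm).symm.trans_le (card_le_indeg (hsub a ha) (by simp [ha2]))⟩
  · have := card_le_indeg (E := E) (T := {g, a, b}) (v := g.2)
      (by simp [insert_subset_iff, hg, ha, hb]) (by simp [← ha2, ← hb2])
    omega

end Degrees

lemma IsCrown.four_le_card [DecidableEq α] {Z : Finset (α × α)} (hZ : IsCrown Z) : 4 ≤ Z.card := by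
  obtain ⟨m, f, hm1, hme, hf0, rfl, hinj⟩ := hZ
  have hm2 : m ≠ 2 := by
    rintro rfl
    -- both edges of a two-edge crown are `(f 0, f 1)`
    exact absurd (hinj 0 (by omega) 1 (by omega) (by simp [zigEdge, hf0])) (by omega)
  rw [card_image_of_injOn fun a ha b hb => hinj a (mem_range.1 ha) b (mem_range.1 hb),
    card_range]
  omega

section Cycle

variable {m : ℕ} {c : ZMod m → α × α}

lemma shares_sub_one (hchain : ∀ k, Shares (c k) (c (k + 1))) (k : ZMod m) :
    Shares (c k) (c (k - 1)) :=
  (by simpa using hchain (k - 1) : Shares (c (k - 1)) (c k)).symm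

lemma cycle_neighbours_ne (hm : 2 < m) (hc : Function.Injective c) (k : ZMod m) :
    c (k - 1) ≠ c k ∧ c (k + 1) ≠ c k ∧ c (k - 1) ≠ c (k + 1) := by
  have hcast : ∀ a : ℕ, 0 < a → a < m → (a : ZMod m) ≠ 0 := fun a ha ham => by
    rw [Ne, ZMod.natCast_eq_zero_iff]
    exact Nat.not_dvd_of_pos_of_lt ha ham
  have h1 : (1 : ZMod m) ≠ 0 := by exact_mod_cast hcast 1 one_pos (by omega)
  have h2 : (2 : ZMod m) ≠ 0 := by exact_mod_cast hcast 2 two_pos hm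
  refine ⟨hc.ne fun h => h1 ?_, hc.ne fun h => h1 ?_, hc.ne fun h => h2 ?_⟩
  · linear_combination -h
  · linear_combination h
  · linear_combination -h

variable [DecidableEq α] {E : Finset (α × α)}

lemma cycle_eq_sub_one_or_add_one_of_shares
    (hdeg : ∀ g ∈ E, outdeg E g.1 ≤ 2 ∧ indeg E g.2 ≤ 2) (hm : 2 < m)
    (hc : Function.Injective c) (hchain : ∀ k, Shares (c k) (c (k + 1))) (hcE : ∀ k, c k ∈ E)
    {k l : ZMod m} (hlk : l ≠ k) (h : Shares (c k) (c l)) : l = k - 1 ∨ l = k + 1 := by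
  by_contra! hl
  obtain ⟨hpred, hsucc, hps⟩ := cycle_neighbours_ne hm hc k
  have hcard : ({c (k - 1), c (k + 1), c l} : Finset (α × α)).card = 3 :=
    card_eq_three.2 ⟨_, _, _, hps, hc.ne hl.1.symm, hc.ne hl.2.symm, rfl⟩
  have := card_le_two_of_shares hdeg (hcE k) (T := {c (k - 1), c (k + 1), c l})
    (by simp [insert_subset_iff, hcE])
    (by simp [hpred, hsucc, hc.ne hlk, h, shares_sub_one hchain, hchain])
  omega

lemma cycle_one_lt_outdeg_and_indeg
    (hdeg : ∀ g ∈ E, outdeg E g.1 ≤ 2 ∧ indeg E g.2 ≤ 2) (hm : 2 < m)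
    (hc : Function.Injective c) (hchain : ∀ k, Shares (c k) (c (k + 1))) (hcE : ∀ k, c k ∈ E)
    (k : ZMod m) : 1 < outdeg E (c k).1 ∧ 1 < indeg E (c k).2 :=
  have ⟨hpred, hsucc, hps⟩ := cycle_neighbours_ne hm hc k
  one_lt_outdeg_and_indeg_of_shares hdeg (hcE k) (hcE _) (hcE _) hpred hsucc hps
    (shares_sub_one hchain k) (hchain k)

variable [NeZero m]

lemma aAdmissible_cycle_iff
    (hdeg : ∀ g ∈ E, outdeg E g.1 ≤ 2 ∧ indeg E g.2 ≤ 2) (hm : 2 < m)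
    (hc : Function.Injective c) (hchain : ∀ k, Shares (c k) (c (k + 1))) (hcE : ∀ k, c k ∈ E)
    {S : Finset (α × α)} :
    AAdmissible E (univ.image c) S ↔ S ⊆ univ.image c ∧ ∀ k, c k ∈ S ∨ c (k + 1) ∈ S := by
  refine ⟨fun ⟨hSZ, _, hC2⟩ => ⟨hSZ, fun k => ?_⟩, fun ⟨hSZ, hcov⟩ => ⟨hSZ, ?_, ?_⟩⟩
  · exact hC2 _ (mem_image_of_mem _ (mem_univ _)) _ (mem_image_of_mem _ (mem_univ _))
      (cycle_neighbours_ne hm hc k).2.1.symm (hchain k)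
  · simp only [mem_image, mem_univ, true_and, forall_exists_index, forall_apply_eq_imp_iff]
    intro k hk
    have := cycle_one_lt_outdeg_and_indeg hdeg hm hc hchain hcE k
    omega
  · simp only [mem_image, mem_univ, true_and, forall_exists_index, forall_apply_eq_imp_iff]
    intro k l hne hsh
    rcases cycle_eq_sub_one_or_add_one_of_shares hdeg hm hc hchain hcE
      (fun h => hne (congrArg c h.symm)) hsh with rfl | rfl
    · simpa [or_comm] using hcov (k - 1)
    · exact hcov k

/-- Given (C2), a chosen edge can be dropped exactly when both its neighbours are chosen. -/
lemma bAdmissible_cycle_iff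
    (hdeg : ∀ g ∈ E, outdeg E g.1 ≤ 2 ∧ indeg E g.2 ≤ 2) (hm : 2 < m)
    (hc : Function.Injective c) (hchain : ∀ k, Shares (c k) (c (k + 1))) (hcE : ∀ k, c k ∈ E)
    {S : Finset (α × α)} (hS : S ⊆ univ.image c) :
    BAdmissible E (univ.image c) S ↔ (∀ k, c k ∈ S ∨ c (k + 1) ∈ S) ∧
      ∀ k, ¬ (c k ∈ S ∧ c (k + 1) ∈ S ∧ c (k + 2) ∈ S) := by
  simp only [BAdmissible, aAdmissible_cycle_iff hdeg hm hc hchain hcE, hS, true_and]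
  refine and_congr_right fun hcov =>
    ⟨fun hmin k ⟨h0, h1, h2⟩ => ?_, fun hno S' hS'S ⟨_, hcov'⟩ => ?_⟩
  · refine hmin (S.erase (c (k + 1))) (erase_ssubset h1)
      ⟨(erase_subset _ _).trans hS, fun j => ?_⟩
    simp only [mem_erase]
    by_cases hj : j = k + 1
    · subst hj
      exact Or.inr ⟨(cycle_neighbours_ne hm hc (k + 1)).2.1,
        by rwa [add_assoc, one_add_one_eq_two]⟩
    by_cases hj' : j = k
    · subst hj'
      exact Or.inl ⟨(cycle_neighbours_ne hm hc j).2.1.symm, h0⟩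
    exact (hcov j).imp (fun h => ⟨hc.ne hj, h⟩)
      (fun h => ⟨hc.ne fun h' => hj' (add_right_cancel h'), h⟩)
  · obtain ⟨g, hgS, hgS'⟩ := exists_of_ssubset hS'S
    obtain ⟨k, -, rfl⟩ := mem_image.1 (hS hgS)
    have hpred := (hcov' (k - 1)).resolve_right (by simpa using hgS')
    have hsucc := (hcov' k).resolve_left hgS'
    refine hno (k - 1) ⟨hS'S.subset hpred, by simpa using hgS, ?_⟩
    rw [show k - 1 + 2 = k + 1 by ring]
    exact hS'S.subset hsucc

end Cycle

lemma image_range_eq_image_univ_val [DecidableEq α] (m : ℕ) [NeZero m] (e : ℕ → α) :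
    (range m).image e = univ.image fun k : ZMod m => e k.val := by
  ext x
  simp only [mem_image, mem_range, mem_univ, true_and]
  refine ⟨fun ⟨i, hi, hx⟩ => ⟨i, ?_⟩, fun ⟨k, hx⟩ => ⟨k.val, k.val_lt, hx⟩⟩
  rwa [ZMod.val_natCast, Nat.mod_eq_of_lt hi]

lemma ZMod.forall_iff_forall_lt {m : ℕ} [NeZero m] {P : ZMod m → Prop} :
    (∀ k, P k) ↔ ∀ i < m, P i :=
  ⟨fun h i _ => h i, fun h k => by simpa using h k.val k.val_lt⟩

theorem stmt11_general (p : ℕ) (X : Finset V)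
    (E : Finset (V × V)) (hN : IsPhyloNet E p X)
    (m : ℕ) (e : ℕ → V × V) (Z : Finset (V × V))
    (hZdef : Z = (Finset.range m).image e)
    (hinj : ∀ i < m, ∀ j < m, e i = e j → i = j)
    (hchain : ∀ i < m, Shares (e i) (e ((i + 1) % m)))
    (hmax : IsMaximalZigzagTrail E Z) (hcrown : IsCrown Z)
    (S : Finset (V × V)) (hS : S ⊆ Z) :
    BAdmissible E Z S ↔
      ((∀ i < m, (e i ∈ S ∨ e ((i + 1) % m) ∈ S)) ∧
       (∀ i < m, ¬ (e i ∈ S ∧ e ((i + 1) % m) ∈ S ∧ e ((i + 2) % m) ∈ S))) := by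
  have hm4 : 4 ≤ m := by
    have := hcrown.four_le_card
    rwa [hZdef, card_image_of_injOn fun i hi j hj => hinj i (mem_range.1 hi) j (mem_range.1 hj),
      card_range] at this
  have : NeZero m := ⟨by omega⟩
  set c : ZMod m → V × V := fun k => e k.val
  have hce : ∀ n : ℕ, c n = e (n % m) := fun n => congrArg e (ZMod.val_natCast m n)
  have hZc : Z = univ.image c := hZdef.trans (image_range_eq_image_univ_val m e)
  have hc : Function.Injective c := fun a b h =>
    ZMod.val_injective m (hinj _ a.val_lt _ b.val_lt h)
  have hce1 : ∀ i : ℕ, c (i + 1) = e ((i + 1) % m) := fun i => by simpa using hce (i + 1)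
  have hce2 : ∀ i : ℕ, c (i + 2) = e ((i + 2) % m) := fun i => by simpa using hce (i + 2)
  have hcchain : ∀ k, Shares (c k) (c (k + 1)) := fun k => by
    have h := hchain k.val k.val_lt
    rwa [← hce1, ZMod.natCast_zmod_val] at h
  subst hZc
  rw [bAdmissible_cycle_iff hN.degrees_le_two (by omega) hc hcchain
    (fun k => hmax.1.1 (mem_image_of_mem c (mem_univ k))) hS,
    ZMod.forall_iff_forall_lt, ZMod.forall_iff_forall_lt]
  refine and_congr (forall₂_congr fun i hi => ?_) (forall₂_congr fun i hi => ?_) <;>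
    simp only [hce, hce1, hce2, Nat.mod_eq_of_lt hi]

/-- For a crown `Z = (e₁, ..., e_m)`, a subset `S ⊆ E(Z)` is B-admissible iff its 0-1
encoding contains no `00` and no `111` read circularly (indices modulo `m`). -/
theorem stmt11 (p : ℕ) (hp : 1 ≤ p) (X : Finset V) (hX : X.Nonempty)
    (E : Finset (V × V)) (hN : IsPhyloNet E p X)
    (m : ℕ) (hm : 1 ≤ m) (hmeven : m % 2 = 0) (e : ℕ → V × V) (Z : Finset (V × V))
    (hZdef : Z = (Finset.range m).image e)
    (hinj : ∀ i < m, ∀ j < m, e i = e j → i = j)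
    (hchain : ∀ i < m, Shares (e i) (e ((i + 1) % m)))
    (hmax : IsMaximalZigzagTrail E Z) (hcrown : IsCrown Z)
    (S : Finset (V × V)) (hS : S ⊆ Z) :
    BAdmissible E Z S ↔
      ((∀ i < m, (e i ∈ S ∨ e ((i + 1) % m) ∈ S)) ∧
       (∀ i < m, ¬ (e i ∈ S ∧ e ((i + 1) % m) ∈ S ∧ e ((i + 2) % m) ∈ S))) :=
  stmt11_general p X E hN m e Z hZdef hinj hchain hmax hcrown S hS
end

section
/- For any rooted almost-binary phylogenetic network N on X, there exists at least one minimal support network G ∈ B_N such that level(G) = level*(N), i.e., the minimum level among all support networks of N is attained by some minimal support network. -/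
open Finset

variable {V : Type} [DecidableEq V] [Fintype V]

/-! A support network `G` of minimum level contains a minimal support network `S`, and passing
to `S` cannot raise the level: in-degrees in a support network are at most 2, so a reticulation
of `S` is one of `G`, and a cycle of the underlying graph of `S` is one of `G`, so every block
of `S` lies in a block of `G`. -/

omit [Fintype V] in
lemma indeg_mono {S' S : Finset (V × V)} (h : S' ⊆ S) (v : V) : indeg S' v ≤ indeg S v :=
  card_le_card (filter_subset_filter _ h)

omit [Fintype V] in
lemma indeg_eq_zero_of_notMem_verts {S : Finset (V × V)} {v : V} (hv : v ∉ verts S) :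
    indeg S v = 0 := by
  refine card_eq_zero.2 (filter_eq_empty_iff.2 fun e he hev => hv ?_)
  exact mem_union_right _ (mem_image.2 ⟨e, he, hev⟩)

omit [Fintype V] in
lemma IsPhyloNet.indeg_le_two {S : Finset (V × V)} {p : ℕ} {X : Finset V}
    (hS : IsPhyloNet S p X) (v : V) : indeg S v ≤ 2 := by
  by_cases hv : v ∈ verts S
  · by_cases h0 : indeg S v = 0
    · omega
    by_cases hvX : v ∈ X
    · have hleaf := hS.leaves_eq ▸ hvX
      rw [mem_filter] at hleaf
      omega
    · rcases (hS.internal_deg v hv h0 hvX).1 with h | h <;> omega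
  · simp [indeg_eq_zero_of_notMem_verts hv]

omit [DecidableEq V] [Fintype V] in
lemma usym_mono {S' S : Finset (V × V)} (h : S' ⊆ S) : usym S' ≤ usym S :=
  fun _ _ hadj => ⟨hadj.1, hadj.2.imp (fun hx => h hx) (fun hx => h hx)⟩

omit [DecidableEq V] [Fintype V] in
lemma SameBlock.mono {S' S : Finset (V × V)} (h : S' ⊆ S) {e f : V × V}
    (hb : SameBlock S' e f) : SameBlock S e f := by
  rcases hb with rfl | ⟨a, w, hcycle, he, hf⟩
  · exact Or.inl rfl
  have hsub : ∀ x ∈ w.edges, x ∈ (usym S).edgeSet := fun x hx =>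
    SimpleGraph.edgeSet_mono (usym_mono h) (w.edges_subset_edgeSet hx)
  refine Or.inr ⟨a, w.transfer (usym S) hsub, hcycle.transfer hsub, ?_, ?_⟩ <;>
    rwa [SimpleGraph.Walk.edges_transfer]

lemma blockReticCount_mono {S' S : Finset (V × V)} {p : ℕ} {X : Finset V} (h : S' ⊆ S)
    (hS : IsPhyloNet S p X) (e : V × V) : blockReticCount S' e ≤ blockReticCount S e := by
  refine Set.ncard_le_ncard ?_ (Set.toFinite _)
  rintro v ⟨hretic, f, hf, hb, hv⟩
  exact ⟨le_antisymm (hS.indeg_le_two v) (hretic ▸ indeg_mono h v), f, h hf, hb.mono h, hv⟩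

lemma level_mono {S' S : Finset (V × V)} {p : ℕ} {X : Finset V} (h : S' ⊆ S)
    (hS : IsPhyloNet S p X) : level S' ≤ level S :=
  Finset.sup_le fun e he =>
    (blockReticCount_mono h hS e).trans (Finset.le_sup (f := blockReticCount S) (h he))

omit [Fintype V] in
lemma IsSupportNet.exists_isMinimalSupportNet_subset {E G : Finset (V × V)} {p : ℕ}
    {X : Finset V} (hG : IsSupportNet E G p X) : ∃ S ⊆ G, IsMinimalSupportNet E S p X := by
  obtain ⟨S, hSG, hS⟩ := exists_minimal_le_of_wellFoundedLT (IsSupportNet E · p X) G hG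
  exact ⟨S, hSG, hS.prop, fun _ hS' => hS.not_lt hS'⟩

theorem stmt12_general (X : Finset V)
    (E : Finset (V × V)) (hN : IsPhyloNet E 1 X) :
    ∃ S, IsMinimalSupportNet E S 1 X ∧
      level S = sInf {n | ∃ G, IsSupportNet E G 1 X ∧ level G = n} := by
  obtain ⟨G, hG, hG_level⟩ :=
    Nat.sInf_mem (⟨level E, E, ⟨subset_rfl, rfl, hN⟩, rfl⟩ :
      {n | ∃ G, IsSupportNet E G 1 X ∧ level G = n}.Nonempty)
  obtain ⟨S, hSG, hS⟩ := hG.exists_isMinimalSupportNet_subset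
  refine ⟨S, hS, le_antisymm ?_ (Nat.sInf_le ⟨S, hS.1, rfl⟩)⟩
  exact hG_level ▸ level_mono hSG hG.2.2

/-- The base level of a rooted almost-binary phylogenetic network, i.e. the minimum level
among all its support networks, is attained by some minimal support network. -/
theorem stmt12 (X : Finset V) (hX : X.Nonempty)
    (E : Finset (V × V)) (hN : IsPhyloNet E 1 X) :
    ∃ S, IsMinimalSupportNet E S 1 X ∧
      level S = sInf {n | ∃ G, IsSupportNet E G 1 X ∧ level G = n} :=
  stmt12_general X E hN
end

section
/- Let p ≥ 1 be an integer, let N be a p-rooted almost-binary phylogenetic network on X, and let Z be a maximal zig-zag trail of N that is a W-fence of length 4, written as v_0 > v_1 < v_2 > v_3 < v_4 with canonical edge ordering (e_1, e_2, e_3, e_4) = ((v_0,v_1), (v_2,v_1), (v_2,v_3), (v_4,v_3)). Then E(Z) has exactly two B-admissible subsets, namely {e_1, e_3, e_4} (encoded ⟨1011⟩) and {e_1, e_2, e_4} (encoded ⟨1101⟩), and each of them contains both incoming edges of exactly one vertex of Z (namely v_3 for ⟨1011⟩ and v_1 for ⟨1101⟩), so that each induces exactly one reticulation among the vertices of Z.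 -/
/-! Maximality of the trail forces the end vertices `v₀` and `v₄` to have out-degree 1: another
out-edge at either end could be attached to the trail. On the other hand `v₁`, `v₃` already have
two in-edges and `v₂` two out-edges inside `Z`. So (C1) forces exactly `e₁` and `e₄`, after which
(C2) only asks for one of `e₂`, `e₃`: the A-admissible subsets are the supersets of
`{e₁, e₃, e₄}` or of `{e₁, e₂, e₄}`, and these two incomparable sets are the minimal ones. -/

open Finset

variable {V : Type} [DecidableEq V] [Fintype V]

section ZigzagTrail

variable {α : Type} [DecidableEq α]

theorem one_lt_indeg_of_mem {E : Finset (α × α)} {a b v : α} (ha : (a, v) ∈ E) (hb : (b, v) ∈ E)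
    (hab : a ≠ b) : 1 < indeg E v :=
  Finset.one_lt_card.mpr ⟨(a, v), by simp [ha], (b, v), by simp [hb], by simp [hab]⟩

theorem one_lt_outdeg_of_mem {E : Finset (α × α)} {u a b : α} (ha : (u, a) ∈ E) (hb : (u, b) ∈ E)
    (hab : a ≠ b) : 1 < outdeg E u :=
  Finset.one_lt_card.mpr ⟨(u, a), by simp [ha], (u, b), by simp [hb], by simp [hab]⟩

/-- Another out-edge of `u` could be prepended to the listing, giving a longer trail. -/
theorem IsMaximalZigzagTrail.outdeg_eq_one {E Z : Finset (α × α)} (hmax : IsMaximalZigzagTrail E Z)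
    {u v : α} {t : List (α × α)} (hnodup : ((u, v) :: t).Nodup) (hZ : ((u, v) :: t).toFinset = Z)
    (hchain : ((u, v) :: t).IsChain Shares) (hu : ∀ e ∈ Z, e.1 = u → e = (u, v)) :
    outdeg E u = 1 := by
  have huv : (u, v) ∈ Z := hZ ▸ by simp
  refine Finset.card_eq_one.mpr ⟨(u, v), Finset.eq_singleton_iff_unique_mem.mpr
    ⟨by simp [hmax.1.1 huv], fun e he => ?_⟩⟩
  obtain ⟨heE, heu⟩ := Finset.mem_filter.mp he
  by_contra hne
  have heZ : e ∉ Z := fun heZ => hne (hu e heZ heu)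
  have hlonger : IsZigzagTrail E (insert e Z) :=
    ⟨Finset.insert_subset heE hmax.1.1, e :: (u, v) :: t, List.cons_ne_nil _ _,
      List.nodup_cons.mpr ⟨by simpa [← hZ] using heZ, hnodup⟩, by simp [← hZ],
      List.isChain_cons_cons.mpr ⟨Or.inl heu, hchain⟩⟩
  exact hmax.2 _ hlonger (Finset.ssubset_insert heZ)

theorem bAdmissible_iff_of_aAdmissible_iff {E Z T₁ T₂ : Finset (α × α)}
    (hA : ∀ S, AAdmissible E Z S ↔ S ⊆ Z ∧ (T₁ ⊆ S ∨ T₂ ⊆ S)) (h₁ : T₁ ⊆ Z) (h₂ : T₂ ⊆ Z)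
    (h₁₂ : ¬ T₁ ⊆ T₂) (h₂₁ : ¬ T₂ ⊆ T₁) (S : Finset (α × α)) :
    BAdmissible E Z S ↔ S = T₁ ∨ S = T₂ := by
  have hT₁ : AAdmissible E Z T₁ := (hA T₁).mpr ⟨h₁, Or.inl le_rfl⟩
  have hT₂ : AAdmissible E Z T₂ := (hA T₂).mpr ⟨h₂, Or.inr le_rfl⟩
  constructor
  · rintro ⟨hS, hmin⟩
    rcases ((hA S).mp hS).2 with hsub | hsub
    · exact Or.inl <| by_contra fun hne =>
        hmin T₁ (Finset.ssubset_iff_subset_ne.mpr ⟨hsub, Ne.symm hne⟩) hT₁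
    · exact Or.inr <| by_contra fun hne =>
        hmin T₂ (Finset.ssubset_iff_subset_ne.mpr ⟨hsub, Ne.symm hne⟩) hT₂
  · rintro (rfl | rfl)
    · refine ⟨hT₁, fun S' hlt hS' => ?_⟩
      rcases ((hA S').mp hS').2 with hsub | hsub
      · exact hlt.2 hsub
      · exact h₂₁ (hsub.trans hlt.subset)
    · refine ⟨hT₂, fun S' hlt hS' => ?_⟩
      rcases ((hA S').mp hS').2 with hsub | hsub
      · exact h₁₂ (hsub.trans hlt.subset)
      · exact hlt.2 hsub

theorem indeg_eq_two_iff {a b c d w v : α} (hbd : b ≠ d) (hwc : w ≠ c) :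
    indeg {(a, w), (b, c), (d, c)} v = 2 ↔ v = c := by
  unfold indeg
  by_cases hvc : v = c
  · subst hvc
    simp [Finset.filter_insert, Finset.filter_singleton, hwc, hbd]
  · by_cases hvw : v = w
    · subst hvw
      simp [Finset.filter_insert, Finset.filter_singleton, Ne.symm hvc, hvc]
    · simp [Finset.filter_insert, Finset.filter_singleton, Ne.symm hvw, Ne.symm hvc, hvc]

theorem filter_indeg_eq_two {s : Finset α} {a b c d w : α} (hbd : b ≠ d) (hwc : w ≠ c)
    (hc : c ∈ s) : (s.filter fun v => indeg {(a, w), (b, c), (d, c)} v = 2) = {c} := by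
  rw [Finset.filter_congr fun v _ => indeg_eq_two_iff hbd hwc, Finset.filter_eq', if_pos hc]

variable {E : Finset (α × α)} {v₀ v₁ v₂ v₃ v₄ : α}

theorem IsMaximalZigzagTrail.outdeg_ends_eq_one_of_wFence
    (hmax : IsMaximalZigzagTrail E {(v₀, v₁), (v₂, v₁), (v₂, v₃), (v₄, v₃)})
    (h₀₂ : v₀ ≠ v₂) (h₀₄ : v₀ ≠ v₄) (h₁₃ : v₁ ≠ v₃) (h₂₄ : v₂ ≠ v₄) :
    outdeg E v₀ = 1 ∧ outdeg E v₄ = 1 := by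
  constructor
  · refine hmax.outdeg_eq_one (v := v₁) (t := [(v₂, v₁), (v₂, v₃), (v₄, v₃)]) ?_ ?_ ?_ ?_
    · simp [h₀₂, h₀₄, h₁₃, h₂₄]
    · simp
    · simp [Shares]
    · simp [Ne.symm h₀₂, Ne.symm h₀₄]
  · refine hmax.outdeg_eq_one (v := v₃) (t := [(v₂, v₃), (v₂, v₁), (v₀, v₁)]) ?_ ?_ ?_ ?_
    · simp [Ne.symm h₀₂, Ne.symm h₁₃, Ne.symm h₂₄]
    · ext
      simp only [List.toFinset_cons, List.toFinset_nil, insert_empty_eq, Finset.mem_insert,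
        Finset.mem_singleton]
      tauto
    · simp [Shares]
    · simp [h₀₄, h₂₄]

theorem aAdmissible_wFence_iff (h₁₃ : v₁ ≠ v₃)
    (h₀ : outdeg E v₀ = 1) (h₄ : outdeg E v₄ = 1) (h₁ : indeg E v₁ ≠ 1) (h₂ : outdeg E v₂ ≠ 1)
    (h₃ : indeg E v₃ ≠ 1) (S : Finset (α × α)) :
    AAdmissible E {(v₀, v₁), (v₂, v₁), (v₂, v₃), (v₄, v₃)} S ↔
      S ⊆ {(v₀, v₁), (v₂, v₁), (v₂, v₃), (v₄, v₃)} ∧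
        ({(v₀, v₁), (v₂, v₃), (v₄, v₃)} ⊆ S ∨ {(v₀, v₁), (v₂, v₁), (v₄, v₃)} ⊆ S) := by
  simp only [Finset.insert_subset_iff, Finset.singleton_subset_iff]
  constructor
  · rintro ⟨hsub, hC1, hC2⟩
    have m₁ : (v₀, v₁) ∈ S := hC1 _ (by simp) (Or.inl h₀)
    have m₄ : (v₄, v₃) ∈ S := hC1 _ (by simp) (Or.inl h₄)
    have m₂₃ := hC2 (v₂, v₁) (by simp) (v₂, v₃) (by simp) (by simp [h₁₃]) (Or.inl rfl)
    tauto
  · rintro ⟨hsub, hS⟩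
    have m₁ : (v₀, v₁) ∈ S := by tauto
    have m₄ : (v₄, v₃) ∈ S := by tauto
    have m₂₃ : (v₂, v₁) ∈ S ∨ (v₂, v₃) ∈ S := by tauto
    have hmissing : ∀ e ∈ ({(v₀, v₁), (v₂, v₁), (v₂, v₃), (v₄, v₃)} : Finset (α × α)), e ∉ S →
        e = (v₂, v₁) ∨ e = (v₂, v₃) := by
      intro e he heS
      simp only [Finset.mem_insert, Finset.mem_singleton] at he
      rcases he with rfl | rfl | rfl | rfl <;> tauto
    refine ⟨hsub, fun e he hcond => by_contra fun heS => ?_, fun e he f hf hne _ => ?_⟩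
    · rcases hmissing e he heS with rfl | rfl <;> tauto
    · by_contra! hS
      rcases hmissing e he hS.1 with rfl | rfl <;> rcases hmissing f hf hS.2 with rfl | rfl <;>
        tauto

end ZigzagTrail

theorem stmt15_general
    (E : Finset (V × V))
    (v₀ v₁ v₂ v₃ v₄ : V) (hdist : ([v₀, v₁, v₂, v₃, v₄] : List V).Nodup)
    (e₁ e₂ e₃ e₄ : V × V)
    (he₁ : e₁ = (v₀, v₁)) (he₂ : e₂ = (v₂, v₁)) (he₃ : e₃ = (v₂, v₃)) (he₄ : e₄ = (v₄, v₃))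
    (Z : Finset (V × V)) (hZdef : Z = {e₁, e₂, e₃, e₄})
    (hmax : IsMaximalZigzagTrail E Z) :
    (∀ S, BAdmissible E Z S ↔ (S = {e₁, e₃, e₄} ∨ S = {e₁, e₂, e₄})) ∧
    ((verts Z).filter fun v => indeg ({e₁, e₃, e₄} : Finset (V × V)) v = 2) = {v₃} ∧
    ((verts Z).filter fun v => indeg ({e₁, e₂, e₄} : Finset (V × V)) v = 2) = {v₁} := by
  subst he₁ he₂ he₃ he₄ hZdef
  simp only [List.nodup_cons, List.mem_cons, List.not_mem_nil, or_false, List.nodup_nil,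
    and_true, not_or] at hdist
  obtain ⟨⟨-, h₀₂, -, h₀₄⟩, ⟨-, h₁₃, -⟩, ⟨-, h₂₄⟩, -, -⟩ := hdist
  obtain ⟨h₀, h₄⟩ := hmax.outdeg_ends_eq_one_of_wFence h₀₂ h₀₄ h₁₃ h₂₄
  have hZE := hmax.1.1
  have h₁ := one_lt_indeg_of_mem (v := v₁) (hZE (by simp)) (hZE (by simp)) h₀₂
  have h₂ := one_lt_outdeg_of_mem (u := v₂) (hZE (by simp)) (hZE (by simp)) h₁₃
  have h₃ := one_lt_indeg_of_mem (v := v₃) (hZE (by simp)) (hZE (by simp)) h₂₄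
  refine ⟨bAdmissible_iff_of_aAdmissible_iff
    (aAdmissible_wFence_iff h₁₃ h₀ h₄ h₁.ne' h₂.ne' h₃.ne') ?_ ?_ ?_ ?_,
    filter_indeg_eq_two h₂₄ h₁₃ (by simp [verts]), ?_⟩
  · simp [Finset.insert_subset_iff]
  · simp [Finset.insert_subset_iff]
  · simp [Finset.insert_subset_iff, Ne.symm h₀₂, Ne.symm h₁₃, h₂₄]
  · simp [Finset.insert_subset_iff, Ne.symm h₀₂, h₁₃, h₂₄]
  · rw [Finset.pair_comm (v₂, v₁), Finset.insert_comm (v₀, v₁)]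
    exact filter_indeg_eq_two h₀₂ (Ne.symm h₁₃) (by simp [verts])

/-- A maximal zig-zag trail that is a W-fence of length 4, `v₀ > v₁ < v₂ > v₃ < v₄`, has
exactly two B-admissible subsets, `⟨1011⟩` and `⟨1101⟩`; the former contains both in-edges
of exactly `v₃` and the latter of exactly `v₁`, so each induces exactly one reticulation. -/
theorem stmt15 (p : ℕ) (hp : 1 ≤ p) (X : Finset V) (hX : X.Nonempty)
    (E : Finset (V × V)) (hN : IsPhyloNet E p X)
    (v₀ v₁ v₂ v₃ v₄ : V) (hdist : ([v₀, v₁, v₂, v₃, v₄] : List V).Nodup)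
    (e₁ e₂ e₃ e₄ : V × V)
    (he₁ : e₁ = (v₀, v₁)) (he₂ : e₂ = (v₂, v₁)) (he₃ : e₃ = (v₂, v₃)) (he₄ : e₄ = (v₄, v₃))
    (Z : Finset (V × V)) (hZdef : Z = {e₁, e₂, e₃, e₄})
    (hmax : IsMaximalZigzagTrail E Z) :
    (∀ S, BAdmissible E Z S ↔ (S = {e₁, e₃, e₄} ∨ S = {e₁, e₂, e₄})) ∧
    ((verts Z).filter fun v => indeg ({e₁, e₃, e₄} : Finset (V × V)) v = 2) = {v₃} ∧
    ((verts Z).filter fun v => indeg ({e₁, e₂, e₄} : Finset (V × V)) v = 2) = {v₁} :=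
  stmt15_general E v₀ v₁ v₂ v₃ v₄ hdist e₁ e₂ e₃ e₄ he₁ he₂ he₃ he₄ Z hZdef hmax
end

section
/- Let p ≥ 1 be an integer, let N be a p-rooted almost-binary phylogenetic network on X, and let Z be a maximal zig-zag trail of N that is an M-fence of length 4, with canonical edge ordering (e_1, e_2, e_3, e_4). Then E(Z) has exactly two B-admissible subsets, encoded as ⟨1011⟩ and ⟨1101⟩, and neither of them contains both incoming edges of any vertex of Z; hence neither induces any reticulation among the vertices of Z. -/
open Finset

variable {V : Type} [DecidableEq V] [Fintype V]

/-!
Maximality of the trail forces the end vertices `v₀` and `v₄` to have in-degree 1 in `N`: a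
further edge into either of them would extend the trail. On the other hand `v₁` and `v₃` are
tails, and `v₂` the head, of two edges of `Z`. So (C1) forces exactly `e₁` and `e₄`, and (C2)
only asks for one of the two edges `e₂`, `e₃` into `v₂`; the minimal choices are `⟨1011⟩` and
`⟨1101⟩`, and the heads `v₀`, `v₂`, `v₄` of the edges in either of them are distinct.
-/

section Degrees

variable {α : Type} [DecidableEq α] {E : Finset (α × α)}

theorem two_le_outdeg {u a b : α} (ha : (u, a) ∈ E) (hb : (u, b) ∈ E) (hab : a ≠ b) :
    2 ≤ outdeg E u := by
  have hsub : ({(u, a), (u, b)} : Finset (α × α)) ⊆ E.filter fun e => e.1 = u := by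
    simp [insert_subset_iff, ha, hb]
  simpa [outdeg, hab] using card_le_card hsub

theorem two_le_indeg {a b v : α} (ha : (a, v) ∈ E) (hb : (b, v) ∈ E) (hab : a ≠ b) :
    2 ≤ indeg E v := by
  have hsub : ({(a, v), (b, v)} : Finset (α × α)) ⊆ E.filter fun e => e.2 = v := by
    simp [insert_subset_iff, ha, hb]
  simpa [indeg, hab] using card_le_card hsub

theorem indeg_le_one_of_injOn_snd (hE : Set.InjOn Prod.snd (E : Set (α × α))) (v : α) :
    indeg E v ≤ 1 :=
  card_le_one.2 fun _ ha _ hb =>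
    hE (mem_filter.1 ha).1 (mem_filter.1 hb).1 ((mem_filter.1 ha).2.trans (mem_filter.1 hb).2.symm)

end Degrees

section Trails

variable {α : Type} [DecidableEq α] {E Z : Finset (α × α)} {a : α × α} {l : List (α × α)}

theorem IsMaximalZigzagTrail.mem_of_shares_head (hmax : IsMaximalZigzagTrail E Z)
    (hZ : (a :: l).toFinset = Z) (hnd : (a :: l).Nodup) (hchain : (a :: l).IsChain Shares)
    {f : α × α} (hf : f ∈ E) (hfa : Shares f a) : f ∈ Z := by
  by_contra hfZ
  have hfl : f ∉ a :: l := fun h => hfZ (hZ ▸ List.mem_toFinset.2 h)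
  exact hmax.2 (insert f Z)
    ⟨insert_subset hf hmax.1.1, f :: a :: l, List.cons_ne_nil _ _, List.nodup_cons.2 ⟨hfl, hnd⟩,
      by simp [hZ], List.isChain_cons_cons.2 ⟨hfa, hchain⟩⟩
    (ssubset_insert hfZ)

theorem IsMaximalZigzagTrail.indeg_eq_one {u v : α} (hmax : IsMaximalZigzagTrail E Z)
    (hZ : ((u, v) :: l).toFinset = Z) (hnd : ((u, v) :: l).Nodup)
    (hchain : ((u, v) :: l).IsChain Shares) (hv : ∀ e ∈ l, e.2 ≠ v) : indeg E v = 1 := by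
  have huv : (u, v) ∈ E := hmax.1.1 (hZ ▸ List.mem_toFinset.2 List.mem_cons_self)
  refine card_eq_one.2 ⟨(u, v), eq_singleton_iff_unique_mem.2 ⟨mem_filter.2 ⟨huv, rfl⟩, ?_⟩⟩
  intro f hf
  obtain ⟨hfE, hfv⟩ := mem_filter.1 hf
  have hfZ := hmax.mem_of_shares_head hZ hnd hchain hfE (Or.inr hfv)
  rcases List.mem_cons.1 (List.mem_toFinset.1 (hZ ▸ hfZ)) with h | h
  · exact h
  · exact absurd hfv (hv f h)

end Trails

theorem bAdmissible_iff_minimal {α : Type} [DecidableEq α] {E Z S : Finset (α × α)} :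
    BAdmissible E Z S ↔ Minimal (AAdmissible E Z) S :=
  minimal_iff_forall_lt.symm

theorem minimal_fence_iff {α : Type*} [DecidableEq α] {a b c d : α} {S : Finset α}
    (hb : b ∉ ({a, c, d} : Finset α)) (hc : c ∉ ({a, b, d} : Finset α)) :
    Minimal (fun S : Finset α => S ⊆ {a, b, c, d} ∧ a ∈ S ∧ d ∈ S ∧ (b ∈ S ∨ c ∈ S)) S ↔
      S = {a, c, d} ∨ S = {a, b, d} := by
  constructor
  · rintro ⟨⟨hS, ha, hd, hbc⟩, hmin⟩
    have hnot : ¬ (b ∈ S ∧ c ∈ S) := fun ⟨hbS, hcS⟩ =>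
      hc (hmin ⟨by simp [insert_subset_iff], by simp, by simp, by simp⟩
        (by simp [insert_subset_iff, ha, hbS, hd]) hcS)
    rcases hbc with hbS | hcS
    · right
      refine Subset.antisymm (fun x hx => ?_) (by simp [insert_subset_iff, ha, hbS, hd])
      have := hS hx
      simp only [mem_insert, mem_singleton] at this ⊢
      rcases this with rfl | rfl | rfl | rfl <;> tauto
    · left
      refine Subset.antisymm (fun x hx => ?_) (by simp [insert_subset_iff, ha, hcS, hd])
      have := hS hx
      simp only [mem_insert, mem_singleton] at this ⊢
      rcases this with rfl | rfl | rfl | rfl <;> tauto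
  · rintro (rfl | rfl)
    · refine ⟨⟨by simp [insert_subset_iff], by simp, by simp, by simp⟩, ?_⟩
      rintro T ⟨-, haT, hdT, hbcT⟩ hT
      have hcT : c ∈ T := hbcT.resolve_left fun h => hb (hT h)
      simp [insert_subset_iff, haT, hcT, hdT]
    · refine ⟨⟨by simp [insert_subset_iff], by simp, by simp, by simp⟩, ?_⟩
      rintro T ⟨-, haT, hdT, hbcT⟩ hT
      have hbT : b ∈ T := hbcT.resolve_right fun h => hc (hT h)
      simp [insert_subset_iff, haT, hbT, hdT]

section MFence

variable {α : Type} [DecidableEq α] {E : Finset (α × α)} {v₀ v₁ v₂ v₃ v₄ : α}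

theorem aAdmissible_mFence_iff (hdist : ([v₀, v₁, v₂, v₃, v₄] : List α).Nodup)
    (hZE : {(v₁, v₀), (v₁, v₂), (v₃, v₂), (v₃, v₄)} ⊆ E)
    (h₀ : indeg E v₀ = 1) (h₄ : indeg E v₄ = 1) (S : Finset (α × α)) :
    AAdmissible E {(v₁, v₀), (v₁, v₂), (v₃, v₂), (v₃, v₄)} S ↔
      S ⊆ {(v₁, v₀), (v₁, v₂), (v₃, v₂), (v₃, v₄)} ∧ (v₁, v₀) ∈ S ∧ (v₃, v₄) ∈ S ∧
        ((v₁, v₂) ∈ S ∨ (v₃, v₂) ∈ S) := by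
  simp only [List.nodup_cons, List.mem_cons, List.not_mem_nil, or_false, not_or] at hdist
  obtain ⟨⟨-, h02, -, -⟩, ⟨-, h13, -⟩, ⟨-, h24⟩, -, -⟩ := hdist
  simp only [insert_subset_iff, singleton_subset_iff] at hZE
  obtain ⟨hE₁, hE₂, hE₃, hE₄⟩ := hZE
  have hout₁ := two_le_outdeg hE₁ hE₂ h02
  have hin₂ := two_le_indeg hE₂ hE₃ h13
  have hout₃ := two_le_outdeg hE₃ hE₄ h24
  constructor
  · rintro ⟨hSZ, hforced, hshared⟩
    exact ⟨hSZ, hforced _ (by simp) (Or.inr h₀), hforced _ (by simp) (Or.inr h₄),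
      hshared _ (by simp) _ (by simp) (by simp [h13]) (Or.inr rfl)⟩
  · rintro ⟨hSZ, h₁S, h₄S, h₂₃S⟩
    refine ⟨hSZ, fun e he hdeg => ?_, fun e he f hf hef _ => ?_⟩
    · simp only [mem_insert, mem_singleton] at he
      rcases he with rfl | rfl | rfl | rfl <;> first | assumption | (dsimp only at hdeg; omega)
    · by_contra! hnot
      simp only [mem_insert, mem_singleton] at he hf
      rcases he with rfl | rfl | rfl | rfl <;> rcases hf with rfl | rfl | rfl | rfl <;> tauto

theorem bAdmissible_mFence_iff (hdist : ([v₀, v₁, v₂, v₃, v₄] : List α).Nodup)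
    (hmax : IsMaximalZigzagTrail E {(v₁, v₀), (v₁, v₂), (v₃, v₂), (v₃, v₄)}) (S : Finset (α × α)) :
    BAdmissible E {(v₁, v₀), (v₁, v₂), (v₃, v₂), (v₃, v₄)} S ↔
      S = {(v₁, v₀), (v₃, v₂), (v₃, v₄)} ∨ S = {(v₁, v₀), (v₁, v₂), (v₃, v₄)} := by
  have hne := hdist
  simp only [List.nodup_cons, List.mem_cons, List.not_mem_nil, or_false, not_or] at hne
  obtain ⟨⟨h01, h02, h03, h04⟩, ⟨h12, h13, h14⟩, ⟨h23, h24⟩, h34, -⟩ := hne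
  have h₀ : indeg E v₀ = 1 := hmax.indeg_eq_one (u := v₁) (l := [(v₁, v₂), (v₃, v₂), (v₃, v₄)])
    (by simp) (by simp [*, Ne.symm]) (by simp [Shares]) (by simp [*, Ne.symm])
  have h₄ : indeg E v₄ = 1 := hmax.indeg_eq_one (u := v₃) (l := [(v₃, v₂), (v₁, v₂), (v₁, v₀)])
    (by ext; simp only [List.mem_toFinset, List.mem_cons, List.not_mem_nil, or_false,
      mem_insert, mem_singleton]; tauto)
    (by simp [*, Ne.symm]) (by simp [Shares]) (by simp [*, Ne.symm])
  rw [bAdmissible_iff_minimal,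
    funext fun S => propext (aAdmissible_mFence_iff hdist hmax.1.1 h₀ h₄ S)]
  exact minimal_fence_iff (by simp [*, Ne.symm]) (by simp [*, Ne.symm])

theorem indeg_le_one_of_bAdmissible_mFence (hdist : ([v₀, v₁, v₂, v₃, v₄] : List α).Nodup)
    (hmax : IsMaximalZigzagTrail E {(v₁, v₀), (v₁, v₂), (v₃, v₂), (v₃, v₄)}) {S : Finset (α × α)}
    (hS : BAdmissible E {(v₁, v₀), (v₁, v₂), (v₃, v₂), (v₃, v₄)} S) (v : α) : indeg S v ≤ 1 := by
  have hne := hdist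
  simp only [List.nodup_cons, List.mem_cons, List.not_mem_nil, or_false, not_or] at hne
  obtain ⟨⟨-, h02, -, h04⟩, -, ⟨-, h24⟩, -, -⟩ := hne
  rcases (bAdmissible_mFence_iff hdist hmax S).1 hS with rfl | rfl <;>
    refine indeg_le_one_of_injOn_snd ?_ v <;> simp [Set.injOn_insert, *, Ne.symm]

end MFence

theorem stmt17_general
    (E : Finset (V × V))
    (v₀ v₁ v₂ v₃ v₄ : V) (hdist : ([v₀, v₁, v₂, v₃, v₄] : List V).Nodup)
    (e₁ e₂ e₃ e₄ : V × V)
    (he₁ : e₁ = (v₁, v₀)) (he₂ : e₂ = (v₁, v₂)) (he₃ : e₃ = (v₃, v₂)) (he₄ : e₄ = (v₃, v₄))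
    (Z : Finset (V × V)) (hZdef : Z = {e₁, e₂, e₃, e₄})
    (hmax : IsMaximalZigzagTrail E Z) :
    (∀ S, BAdmissible E Z S ↔ (S = {e₁, e₃, e₄} ∨ S = {e₁, e₂, e₄})) ∧
    (∀ S, BAdmissible E Z S → ∀ v ∈ verts Z, indeg S v ≠ 2) := by
  subst he₁ he₂ he₃ he₄ hZdef
  exact ⟨bAdmissible_mFence_iff hdist hmax, fun S hS v _ =>
    (indeg_le_one_of_bAdmissible_mFence hdist hmax hS v).trans_lt one_lt_two |>.ne⟩

/-- A maximal zig-zag trail that is an M-fence of length 4, `v₀ < v₁ > v₂ < v₃ > v₄`, has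
exactly two B-admissible subsets, `⟨1011⟩` and `⟨1101⟩`, and neither contains both incoming
edges of any vertex of `Z`; hence neither induces any reticulation among its vertices. -/
theorem stmt17 (p : ℕ) (hp : 1 ≤ p) (X : Finset V) (hX : X.Nonempty)
    (E : Finset (V × V)) (hN : IsPhyloNet E p X)
    (v₀ v₁ v₂ v₃ v₄ : V) (hdist : ([v₀, v₁, v₂, v₃, v₄] : List V).Nodup)
    (e₁ e₂ e₃ e₄ : V × V)
    (he₁ : e₁ = (v₁, v₀)) (he₂ : e₂ = (v₁, v₂)) (he₃ : e₃ = (v₃, v₂)) (he₄ : e₄ = (v₃, v₄))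
    (Z : Finset (V × V)) (hZdef : Z = {e₁, e₂, e₃, e₄})
    (hmax : IsMaximalZigzagTrail E Z) :
    (∀ S, BAdmissible E Z S ↔ (S = {e₁, e₃, e₄} ∨ S = {e₁, e₂, e₄})) ∧
    (∀ S, BAdmissible E Z S → ∀ v ∈ verts Z, indeg S v ≠ 2) :=
  stmt17_general E v₀ v₁ v₂ v₃ v₄ hdist e₁ e₂ e₃ e₄ he₁ he₂ he₃ he₄ Z hZdef hmax
end
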